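/- arXiv:1708.00427 — 5 statements merged into one kernel-verified Lean document; each statement's English description precedes it below -/
import Mathlib

section
/- Suppose β̂ ∈ ℝ^p satisfies the Lasso optimality condition with dual vector v ∈ ℝ^p: Σ_{i=1}^n (y_i − x_i'β̂)x_i = v, v_j = λ·sign(β̂_j) for all j in the support J = {j : β̂_j ≠ 0}, and the strict dual feasibility |v_j| < λ holds for all j ∉ J. If in addition the matrix Σ_{i=1}^n x_{i,J} x_{i,J}' is invertible (equivalently, the columns of the design matrix indexed by J are linearly independent), then β̂ is the unique global minimizer of the Lasso objective F(β) = (1/2)Σ_{i=1}^n (y_i − x_i'β)² + λ‖β‖₁. -/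
open scoped BigOperators

noncomputable section

/-- Euclidean inner product on `Fin p → ℝ`. -/
def dotp {p : ℕ} (a b : Fin p → ℝ) : ℝ := ∑ j, a j * b j

/-- The Lasso objective `F(β) = (1/2)∑ᵢ (yᵢ − xᵢ'β)² + λ‖β‖₁`. -/
def lassoObj {n p : ℕ} (x : Fin n → Fin p → ℝ) (y : Fin n → ℝ) (lam : ℝ)
    (β : Fin p → ℝ) : ℝ :=
  (1 / 2) * ∑ i, (y i - dotp (x i) β) ^ 2 + lam * ∑ j, |β j|

lemma lasso_expand {n p : ℕ} (x : Fin n → Fin p → ℝ) (y : Fin n → ℝ) (lam : ℝ)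
    (βhat : Fin p → ℝ) (v : Fin p → ℝ)
    (hv : ∀ j, ∑ i, (y i - dotp (x i) βhat) * x i j = v j) (β : Fin p → ℝ) :
    lassoObj x y lam β = lassoObj x y lam βhat
      + (1/2) * ∑ i, (dotp (x i) (fun j => β j - βhat j)) ^ 2
      + ∑ j, (lam * |β j| - lam * |βhat j| - v j * (β j - βhat j)) := by
  have hdot : ∀ i, dotp (x i) β = dotp (x i) βhat + dotp (x i) (fun j => β j - βhat j) := by
    intro i
    simp only [dotp, mul_sub, Finset.sum_sub_distrib]
    ring
  have hcross : ∑ i, (y i - dotp (x i) βhat) * dotp (x i) (fun j => β j - βhat j)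
      = ∑ j, v j * (β j - βhat j) := by
    simp only [dotp, Finset.mul_sum]
    rw [Finset.sum_comm]
    refine Finset.sum_congr rfl fun j _ => ?_
    rw [← hv j, Finset.sum_mul]
    exact Finset.sum_congr rfl fun i _ => by simp only [dotp]; ring
  have hsq : ∀ i, (y i - dotp (x i) β) ^ 2
      = (y i - dotp (x i) βhat) ^ 2
        - 2 * ((y i - dotp (x i) βhat) * dotp (x i) (fun j => β j - βhat j))
        + (dotp (x i) (fun j => β j - βhat j)) ^ 2 := by
    intro i; rw [hdot i]; ring
  simp only [lassoObj]
  rw [Finset.sum_congr rfl fun i _ => hsq i]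
  rw [Finset.sum_add_distrib, Finset.sum_sub_distrib, ← Finset.mul_sum, hcross,
    Finset.sum_sub_distrib, Finset.sum_sub_distrib, ← Finset.mul_sum, ← Finset.mul_sum]
  ring

/-- if `β̂` satisfies the Lasso optimality condition with strict dual feasibility
off the support `J`, and the Gram matrix `∑ᵢ x_{i,J} x_{i,J}'` is invertible, then `β̂` is the
unique global minimizer of the Lasso objective. -/
theorem lasso_unique_minimizer_of_strict_dual {n p : ℕ} (x : Fin n → Fin p → ℝ)
    (y : Fin n → ℝ) (lam : ℝ) (hlam : 0 < lam) (βhat : Fin p → ℝ)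
    (J : Finset (Fin p)) (hJ : ∀ j, j ∈ J ↔ βhat j ≠ 0)
    (v : Fin p → ℝ)
    (hv : ∀ j, ∑ i, (y i - dotp (x i) βhat) * x i j = v j)
    (hvJ : ∀ j ∈ J, v j = lam * Real.sign (βhat j))
    (hstrict : ∀ j ∉ J, |v j| < lam)
    (hrank : IsUnit (Matrix.of fun a b : ↥J => ∑ i, x i a.1 * x i b.1 : Matrix ↥J ↥J ℝ)) :
    (∀ β, lassoObj x y lam βhat ≤ lassoObj x y lam β) ∧
    (∀ b : Fin p → ℝ, (∀ β, lassoObj x y lam b ≤ lassoObj x y lam β) → b = βhat) := by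
  have htermJ : ∀ (β : Fin p → ℝ), ∀ j ∈ J,
      0 ≤ lam * |β j| - lam * |βhat j| - v j * (β j - βhat j) := by
    intro β j hj
    have hne : βhat j ≠ 0 := (hJ j).1 hj
    rw [hvJ j hj]
    rcases hne.lt_or_gt with h | h
    · rw [Real.sign_of_neg h, abs_of_neg h]
      nlinarith [neg_abs_le (β j), hlam.le]
    · rw [Real.sign_of_pos h, abs_of_pos h]
      nlinarith [le_abs_self (β j), hlam.le]
  have htermNJ : ∀ (β : Fin p → ℝ), ∀ j ∉ J,
      (lam - |v j|) * |β j - βhat j| ≤ lam * |β j| - lam * |βhat j| - v j * (β j - βhat j) := by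
    intro β j hj
    have h0 : βhat j = 0 := by
      by_contra h; exact hj ((hJ j).2 h)
    rw [h0]
    simp only [sub_zero, abs_zero, mul_zero]
    have h1 : v j * β j ≤ |v j| * |β j| := by
      calc v j * β j ≤ |v j * β j| := le_abs_self _
      _ = |v j| * |β j| := abs_mul _ _
    nlinarith
  have hterm0 : ∀ (β : Fin p → ℝ) (j : Fin p),
      0 ≤ lam * |β j| - lam * |βhat j| - v j * (β j - βhat j) := by
    intro β j
    by_cases hj : j ∈ J
    · exact htermJ β j hj
    · refine le_trans ?_ (htermNJ β j hj)
      exact mul_nonneg (by linarith [hstrict j hj, abs_nonneg (v j)]) (abs_nonneg _)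
  have hmin : ∀ β, lassoObj x y lam βhat ≤ lassoObj x y lam β := by
    intro β
    rw [lasso_expand x y lam βhat v hv β]
    have h1 : 0 ≤ (1/2 : ℝ) * ∑ i, (dotp (x i) (fun j => β j - βhat j)) ^ 2 := by positivity
    have h2 : 0 ≤ ∑ j, (lam * |β j| - lam * |βhat j| - v j * (β j - βhat j)) :=
      Finset.sum_nonneg fun j _ => hterm0 β j
    linarith
  refine ⟨hmin, ?_⟩
  intro b hb
  have heq : lassoObj x y lam b = lassoObj x y lam βhat := le_antisymm (hb βhat) (hmin b)
  have hexp := lasso_expand x y lam βhat v hv b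
  rw [heq] at hexp
  set A := (1/2 : ℝ) * ∑ i, (dotp (x i) (fun j => b j - βhat j)) ^ 2 with hA
  set B := ∑ j, (lam * |b j| - lam * |βhat j| - v j * (b j - βhat j)) with hB
  have hA0 : 0 ≤ A := by rw [hA]; positivity
  have hB0 : 0 ≤ B := Finset.sum_nonneg fun j _ => hterm0 b j
  have hAz : A = 0 := by linarith
  have hBz : B = 0 := by linarith
  -- each residual is zero
  have hsum0 : ∑ i, (dotp (x i) (fun j => b j - βhat j)) ^ 2 = 0 := by
    have h := hAz; rw [hA] at h; linarith
  have hd : ∀ i, dotp (x i) (fun j => b j - βhat j) = 0 := by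
    intro i
    have h := (Finset.sum_eq_zero_iff_of_nonneg
      (fun i (_ : i ∈ Finset.univ) => sq_nonneg (dotp (x i) (fun j => b j - βhat j)))).1
      hsum0 i (Finset.mem_univ i)
    exact (pow_eq_zero_iff two_ne_zero).1 h
  -- each term is zero
  have hBz' : ∑ j, (lam * |b j| - lam * |βhat j| - v j * (b j - βhat j)) = 0 := by
    rw [← hB]; exact hBz
  have hBj : ∀ j, lam * |b j| - lam * |βhat j| - v j * (b j - βhat j) = 0 := by
    intro j
    exact (Finset.sum_eq_zero_iff_of_nonneg
      (fun j (_ : j ∈ Finset.univ) => hterm0 b j)).1 hBz' j (Finset.mem_univ j)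
  -- off-support coordinates agree
  have hoff : ∀ j ∉ J, b j = βhat j := by
    intro j hj
    have h := htermNJ b j hj
    rw [hBj j] at h
    have hpos : 0 < lam - |v j| := by linarith [hstrict j hj]
    have habs : |b j - βhat j| = 0 := by
      nlinarith [abs_nonneg (b j - βhat j)]
    have := abs_eq_zero.1 habs
    linarith
  -- Gram matrix argument for on-support coordinates
  set δ : Fin p → ℝ := fun j => b j - βhat j with hδ
  have hδoff : ∀ j ∉ J, δ j = 0 := fun j hj => by
    simp only [hδ]; rw [hoff j hj, sub_self]
  set M : Matrix ↥J ↥J ℝ := Matrix.of fun a b : ↥J => ∑ i, x i a.1 * x i b.1 with hM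
  set w : ↥J → ℝ := fun a => δ a.1 with hw
  have hinner : ∀ i, ∑ b' : ↥J, x i b'.1 * δ b'.1 = 0 := by
    intro i
    have h1 : ∑ b' : ↥J, x i b'.1 * δ b'.1 = ∑ j ∈ J, x i j * δ j :=
      Finset.sum_coe_sort J (fun j => x i j * δ j)
    have h2 : ∑ j ∈ J, x i j * δ j = ∑ j, x i j * δ j := by
      refine Finset.sum_subset (Finset.subset_univ J) fun j _ hj => ?_
      rw [hδoff j hj, mul_zero]
    rw [h1, h2]
    exact hd i
  have hMw : M.mulVec w = 0 := by
    funext a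
    simp only [Matrix.mulVec, dotProduct, hM, Matrix.of_apply, Pi.zero_apply]
    have : ∀ b' : ↥J, (∑ i, x i a.1 * x i b'.1) * w b'
        = ∑ i, x i a.1 * (x i b'.1 * δ b'.1) := by
      intro b'
      rw [Finset.sum_mul]
      exact Finset.sum_congr rfl fun i _ => by simp [hw]; ring
    rw [Finset.sum_congr rfl fun b' _ => this b', Finset.sum_comm]
    refine Finset.sum_eq_zero fun i _ => ?_
    rw [← Finset.mul_sum, hinner i, mul_zero]
  have hdet : IsUnit M.det := (Matrix.isUnit_iff_isUnit_det M).1 hrank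
  have hw0 : w = 0 := by
    have h1 : M⁻¹.mulVec (M.mulVec w) = w := by
      rw [Matrix.mulVec_mulVec, Matrix.nonsing_inv_mul M hdet, Matrix.one_mulVec]
    rw [hMw, Matrix.mulVec_zero] at h1
    exact h1.symm
  funext j
  by_cases hj : j ∈ J
  · have : w ⟨j, hj⟩ = 0 := by rw [hw0]; rfl
    have : δ j = 0 := this
    simpa [hδ, sub_eq_zero] using this
  · exact hoff j hj
end
end

section
/- Let β̂ minimize the Lasso objective F(β) = (1/2)Σ_{i=1}^n (y_i − x_i'β)² + λ‖β‖₁, let J₀ = {j : β̂_j ≠ 0}, and let v = Σ_{i=1}^n (y_i − x_i'β̂)x_i be the dual vector. Assume max_{j ∉ J₀} |v_j| < λ and that Σ̂_{J₀} is invertible. Define η(0) = n^{-1}Σ̂_{J₀}^{-1}x_{n+1,J₀} / (1 + n^{-1}x_{n+1,J₀}'Σ̂_{J₀}^{-1}x_{n+1,J₀}), γ(0) = (x_{n+1,J₀^c} − Σ̂_{J₀^c,J₀}Σ̂_{J₀}^{-1}x_{n+1,J₀}) / (1 + n^{-1}x_{n+1,J₀}'Σ̂_{J₀}^{-1}x_{n+1,J₀}),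 and t₁ = min_{j∈J₀}(−β̂_j/η_j(0))₊₊ ∧ min_{j∈J₀^c}((sign(γ_j(0))λ − v_j)/γ_j(0))₊₊, where (z)₊₊ equals z if z > 0 and +∞ if z ≤ 0, with the conventions 0/0 = 0 and z/0 = sign(z)·∞ for z ≠ 0. Then for every t ∈ [0, t₁], the vector β(t) ∈ ℝ^p defined by β(t)_{J₀} = β̂_{J₀} + t·η(0) and β(t)_j = 0 for j ∉ J₀ is a global minimizer of the augmented objective F(β) + (1/2)(x_{n+1}'β̂ + t − x_{n+1}'β)². -/
open scoped BigOperators Matrix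

noncomputable section

/-- The augmented Lasso objective with `(x_{n+1}, ynew)` added as the `(n+1)`-th sample. -/
def augObj {n p : ℕ} (x : Fin n → Fin p → ℝ) (y : Fin n → ℝ) (xnew : Fin p → ℝ)
    (lam : ℝ) (ynew : ℝ) (β : Fin p → ℝ) : ℝ :=
  lassoObj x y lam β + (1 / 2) * (ynew - dotp xnew β) ^ 2

/-- The submatrix `Σ̂_J` of the sample covariance matrix `Σ̂ = n⁻¹∑ᵢ xᵢxᵢ'`. -/
def gramJ {n p : ℕ} (x : Fin n → Fin p → ℝ) (J : Finset (Fin p)) : Matrix ↥J ↥J ℝ :=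
  Matrix.of fun a b => (1 / (n : ℝ)) * ∑ i, x i a.1 * x i b.1

/-- The subvector `u_J` of `u` with coordinates in `J`. -/
def subv {p : ℕ} (u : Fin p → ℝ) (J : Finset (Fin p)) : ↥J → ℝ := fun a => u a.1

/-- `Σ̂_J⁻¹ x_{n+1,J}`. -/
def invPart {n p : ℕ} (x : Fin n → Fin p → ℝ) (J : Finset (Fin p)) (xnew : Fin p → ℝ) :
    ↥J → ℝ :=
  (gramJ x J)⁻¹ *ᵥ subv xnew J

/-- The denominator `1 + n⁻¹ x_{n+1,J}'Σ̂_J⁻¹x_{n+1,J}`. -/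
def denomC {n p : ℕ} (x : Fin n → Fin p → ℝ) (J : Finset (Fin p)) (xnew : Fin p → ℝ) : ℝ :=
  1 + (1 / (n : ℝ)) * (subv xnew J ⬝ᵥ invPart x J xnew)

/-- The slope vector `η = n⁻¹Σ̂_J⁻¹x_{n+1,J} / (1 + n⁻¹x_{n+1,J}'Σ̂_J⁻¹x_{n+1,J})`,
extended by `0` off `J`. -/
def etaV {n p : ℕ} (x : Fin n → Fin p → ℝ) (J : Finset (Fin p)) (xnew : Fin p → ℝ) :
    Fin p → ℝ := fun j =>
  if h : j ∈ J then (1 / (n : ℝ)) * invPart x J xnew ⟨j, h⟩ / denomC x J xnew else 0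

/-- The dual slope vector
`γ = (x_{n+1,J^c} − Σ̂_{J^c,J}Σ̂_J⁻¹x_{n+1,J}) / (1 + n⁻¹x_{n+1,J}'Σ̂_J⁻¹x_{n+1,J})`
(only its coordinates off `J` are used). -/
def gammaV {n p : ℕ} (x : Fin n → Fin p → ℝ) (J : Finset (Fin p)) (xnew : Fin p → ℝ) :
    Fin p → ℝ := fun j =>
  (xnew j - ∑ a : ↥J, ((1 / (n : ℝ)) * ∑ i, x i j * x i a.1) * invPart x J xnew a) /
    denomC x J xnew

/-- `rpp a b` is `(a/b)₊₊ ∈ EReal`, the ratio `a/b` computed with the conventions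
`0/0 = 0`, `z/0 = sign(z)·∞`, and then `(z)₊₊ = z` if `z > 0`, `(z)₊₊ = +∞` if `z ≤ 0`.
(When `b = 0` the result is always `+∞`, matching the conventions.) -/
def rpp (a b : ℝ) : EReal := if b ≠ 0 ∧ 0 < a / b then ((a / b : ℝ) : EReal) else ⊤

/-- The first point of change
`t₁ = min_{j∈J}(−β̂_j/η_j)₊₊ ∧ min_{j∈J^c}((sign(γ_j)λ − v_j)/γ_j)₊₊`. -/
def tOne {n p : ℕ} (x : Fin n → Fin p → ℝ) (J : Finset (Fin p)) (xnew : Fin p → ℝ)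
    (βhat v : Fin p → ℝ) (lam : ℝ) : EReal :=
  (J.inf fun j => rpp (-(βhat j)) (etaV x J xnew j)) ⊓
    (Jᶜ.inf fun j => rpp (Real.sign (gammaV x J xnew j) * lam - v j) (gammaV x J xnew j))

/-- The homotopy solution `β(t)`: `β(t)_J = β̂_J + t·η`, `β(t)_{J^c} = 0`. -/
def betaT {n p : ℕ} (x : Fin n → Fin p → ℝ) (J : Finset (Fin p)) (xnew : Fin p → ℝ)
    (βhat : Fin p → ℝ) (t : ℝ) : Fin p → ℝ := fun j =>
  if j ∈ J then βhat j + t * etaV x J xnew j else 0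

/-!
Along the proposed path the squared loss has gradient `-(v + t γ(0))` at `β(t)`: the residual of the
new sample is `t / c` with `c = 1 + n⁻¹ x_{n+1,J₀}' Σ̂_{J₀}⁻¹ x_{n+1,J₀}`, and the normal equations
on `J₀` make `γ(0)` vanish there.  On `J₀` the dual vector thus stays `λ · sign β̂_j` (the KKT
conditions of `β̂`), and `t ≤ t₁` says precisely that no coordinate `β̂_j + t η_j` crosses zero and
that no off-support coordinate `v_j + t γ_j` leaves `[-λ, λ]`.  Hence `v + t γ(0)` is a subgradient
of `λ‖·‖₁` at `β(t)`, which for a convex quadratic plus `λ‖·‖₁` certifies global optimality.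
-/

theorem Real.sign_mul_eq_abs_of_mul_nonneg {b c : ℝ} (hb : b ≠ 0) (h : 0 ≤ b * c) :
    Real.sign b * c = |c| := by
  rcases hb.lt_or_gt with hb | hb
  · rw [Real.sign_of_neg hb, abs_of_nonpos (nonpos_of_mul_nonneg_right h hb)]
    ring
  · rw [Real.sign_of_pos hb, abs_of_nonneg (nonneg_of_mul_nonneg_right h hb), one_mul]

theorem Real.abs_sign_of_ne_zero {r : ℝ} (hr : r ≠ 0) : |Real.sign r| = 1 := by
  rcases Real.sign_apply_eq_of_ne_zero r hr with h | h <;> simp [h]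

theorem Real.coe_signType_sign_eq_sign {r : ℝ} (hr : r ≠ 0) :
    (SignType.sign r : ℝ) = Real.sign r := by
  rcases hr.lt_or_gt with h | h
  · simp [h, Real.sign_of_neg]
  · simp [h, Real.sign_of_pos]

section Lasso

variable {n p : ℕ} (x : Fin n → Fin p → ℝ) (y : Fin n → ℝ) (lam : ℝ)

theorem dotp_eq_dotProduct (a b : Fin p → ℝ) : dotp a b = a ⬝ᵥ b := rfl

theorem sum_sq_residual_eq (b β : Fin p → ℝ) :
    ∑ i, (y i - dotp (x i) β) ^ 2 =
      ∑ i, (y i - dotp (x i) b) ^ 2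
        - 2 * ∑ j, (∑ i, (y i - dotp (x i) b) * x i j) * (β - b) j
        + ∑ i, dotp (x i) (β - b) ^ 2 := by
  have hcross : ∑ j, (∑ i, (y i - dotp (x i) b) * x i j) * (β - b) j =
      ∑ i, (y i - dotp (x i) b) * dotp (x i) (β - b) := by
    simp only [dotp, Pi.sub_apply, Finset.sum_mul, Finset.mul_sum]
    rw [Finset.sum_comm]
    exact Finset.sum_congr rfl fun i _ => Finset.sum_congr rfl fun j _ => by ring
  have hres : ∀ i, y i - dotp (x i) β = (y i - dotp (x i) b) - dotp (x i) (β - b) := by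
    intro i
    simp only [dotp_eq_dotProduct, dotProduct_sub]
    ring
  simp only [hcross, hres, sub_sq, Finset.sum_add_distrib, Finset.sum_sub_distrib,
    Finset.mul_sum, mul_assoc]

theorem lassoObj_le_of_subgradient (b w : Fin p → ℝ)
    (hw : ∀ j, ∑ i, (y i - dotp (x i) b) * x i j = w j)
    (hbound : ∀ j, |w j| ≤ lam) (hcompl : ∀ j, w j * b j = lam * |b j|) (β : Fin p → ℝ) :
    lassoObj x y lam b ≤ lassoObj x y lam β := by
  have hquad : 0 ≤ ∑ i, dotp (x i) (β - b) ^ 2 := Finset.sum_nonneg fun i _ => sq_nonneg _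
  have hpen : ∀ j, w j * (β - b) j ≤ lam * |β j| - lam * |b j| := fun j => by
    have hdual : w j * β j ≤ lam * |β j| := (le_abs_self (w j * β j)).trans
      ((abs_mul _ _).trans_le (mul_le_mul_of_nonneg_right (hbound j) (abs_nonneg _)))
    rw [Pi.sub_apply, mul_sub]
    linarith [hcompl j]
  have hsum := Finset.sum_le_sum fun j (_ : j ∈ Finset.univ) => hpen j
  simp only [Finset.sum_sub_distrib, ← Finset.mul_sum] at hsum
  simp only [lassoObj, sum_sq_residual_eq x y b β, hw]
  linarith

theorem lassoObj_update_add (b : Fin p → ℝ) (j : Fin p) (s : ℝ) :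
    lassoObj x y lam (Function.update b j (b j + s)) =
      lassoObj x y lam b - s * ∑ i, (y i - dotp (x i) b) * x i j
        + s ^ 2 / 2 * ∑ i, x i j ^ 2 + lam * (|b j + s| - |b j|) := by
  have hstep : Function.update b j (b j + s) - b = Pi.single j s := by
    ext k
    rcases eq_or_ne k j with rfl | hk <;> simp [Function.update_of_ne, *]
  have habs : ∑ k, |Function.update b j (b j + s) k| = ∑ k, |b k| + (|b j + s| - |b j|) := by
    rw [← sub_eq_iff_eq_add', ← Finset.sum_sub_distrib, Finset.sum_eq_single j]
    · simp
    · intro k _ hk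
      simp [Function.update_of_ne hk]
    · simp
  rw [lassoObj, lassoObj, sum_sq_residual_eq x y b (Function.update b j (b j + s)), hstep,
    habs]
  simp only [dotp_eq_dotProduct, dotProduct_single, Pi.single_apply, mul_ite, mul_zero,
    Finset.sum_ite_eq', Finset.mem_univ, if_true, mul_pow, ← Finset.sum_mul]
  ring

/- Since `b j ≠ 0`, the objective along the `j`-th coordinate is differentiable at `b`, so its
minimum there is a critical point. -/
theorem lasso_kkt_of_ne_zero {b : Fin p → ℝ}
    (hmin : ∀ β, lassoObj x y lam b ≤ lassoObj x y lam β) {j : Fin p} (hj : b j ≠ 0) :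
    ∑ i, (y i - dotp (x i) b) * x i j = lam * Real.sign (b j) := by
  set g := ∑ i, (y i - dotp (x i) b) * x i j with hg
  set A := ∑ i, x i j ^ 2 with hA
  let h : ℝ → ℝ := fun s => -s * g + s ^ 2 / 2 * A + lam * (|b j + s| - |b j|)
  have hlocal : IsLocalMin h 0 := Filter.Eventually.of_forall fun s => by
    have := hmin (Function.update b j (b j + s))
    rw [lassoObj_update_add, ← hg, ← hA] at this
    simp only [h, neg_zero, zero_mul, add_zero, sub_self, mul_zero, ne_eq,
      OfNat.ofNat_ne_zero, not_false_eq_true, zero_pow, zero_div]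
    linarith
  have hderiv : HasDerivAt h (-g + lam * Real.sign (b j)) 0 := by
    have habs : HasDerivAt (fun s => |b j + s|) (Real.sign (b j)) 0 := by
      rw [← Real.coe_signType_sign_eq_sign hj]
      exact HasDerivAt.comp_const_add (b j) 0 (by simpa using hasDerivAt_abs hj)
    exact ((((hasDerivAt_id 0).neg.mul_const g).add
      (((hasDerivAt_pow 2 0).div_const 2).mul_const A)).add
      ((habs.sub_const |b j|).const_mul lam)).congr_deriv (by norm_num)
  linarith [hlocal.hasDerivAt_eq_zero hderiv]

theorem augObj_eq_lassoObj_snoc (xnew : Fin p → ℝ) (ynew : ℝ) (β : Fin p → ℝ) :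
    augObj x y xnew lam ynew β =
      lassoObj (Fin.snoc (α := fun _ => Fin p → ℝ) x xnew) (Fin.snoc y ynew) lam β := by
  simp only [augObj, lassoObj, Fin.sum_univ_castSucc, Fin.snoc_castSucc, Fin.snoc_last]
  ring

theorem augObj_le_of_subgradient (xnew : Fin p → ℝ) (ynew : ℝ) (b w : Fin p → ℝ)
    (hw : ∀ j, ∑ i, (y i - dotp (x i) b) * x i j + (ynew - dotp xnew b) * xnew j = w j)
    (hbound : ∀ j, |w j| ≤ lam) (hcompl : ∀ j, w j * b j = lam * |b j|) (β : Fin p → ℝ) :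
    augObj x y xnew lam ynew b ≤ augObj x y xnew lam ynew β := by
  simp only [augObj_eq_lassoObj_snoc]
  refine lassoObj_le_of_subgradient _ _ lam b w (fun j => ?_) hbound hcompl β
  simpa only [Fin.sum_univ_castSucc, Fin.snoc_castSucc, Fin.snoc_last] using hw j

end Lasso

theorem le_div_of_coe_le_rpp {a b t : ℝ} (h : (t : EReal) ≤ rpp a b) (hb : b ≠ 0)
    (hab : 0 < a / b) : t ≤ a / b := by
  rw [rpp, if_pos ⟨hb, hab⟩] at h
  exact_mod_cast h

theorem mul_add_mul_nonneg_of_le_rpp {a b t : ℝ} (ht : 0 ≤ t) (h : (t : EReal) ≤ rpp (-a) b) :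
    0 ≤ a * (a + t * b) := by
  rcases le_or_gt 0 (a * b) with hab | hab
  · nlinarith [mul_nonneg ht hab, sq_nonneg a]
  have hb : b ≠ 0 := by
    rintro rfl
    simp at hab
  have ha : a ≠ 0 := by
    rintro rfl
    simp at hab
  have hratio : -a / b * -(a * b) = a ^ 2 := by
    field_simp
  have hle := le_div_of_coe_le_rpp h hb (by
    rw [← mul_pos_iff_of_pos_right (neg_pos.mpr hab), hratio]
    positivity)
  nlinarith [mul_le_mul_of_nonneg_right hle (neg_pos.mpr hab).le]

theorem abs_add_mul_le_of_le_rpp {v γ t lam : ℝ} (ht : 0 ≤ t) (hv : |v| < lam)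
    (h : (t : EReal) ≤ rpp (Real.sign γ * lam - v) γ) : |v + t * γ| ≤ lam := by
  obtain ⟨hv₁, hv₂⟩ := abs_lt.mp hv
  rcases lt_trichotomy γ 0 with hγ | rfl | hγ
  · rw [Real.sign_of_neg hγ] at h
    have hle := le_div_of_coe_le_rpp h hγ.ne (div_pos_of_neg_of_neg (by linarith) hγ)
    rw [le_div_iff_of_neg hγ] at hle
    have : t * γ ≤ 0 := mul_nonpos_of_nonneg_of_nonpos ht hγ.le
    exact abs_le.mpr ⟨by linarith, by linarith⟩
  · simpa using hv.le
  · rw [Real.sign_of_pos hγ] at h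
    have hle := le_div_of_coe_le_rpp h hγ.ne' (div_pos (by linarith) hγ)
    rw [le_div_iff₀ hγ] at hle
    have : 0 ≤ t * γ := mul_nonneg ht hγ.le
    exact abs_le.mpr ⟨by linarith, by linarith⟩

theorem tOne_le_rpp_etaV {n p : ℕ} {x : Fin n → Fin p → ℝ} {J : Finset (Fin p)}
    {xnew βhat v : Fin p → ℝ} {lam : ℝ} {j : Fin p} (hj : j ∈ J) :
    tOne x J xnew βhat v lam ≤ rpp (-(βhat j)) (etaV x J xnew j) :=
  inf_le_left.trans (Finset.inf_le hj)

theorem tOne_le_rpp_gammaV {n p : ℕ} {x : Fin n → Fin p → ℝ} {J : Finset (Fin p)}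
    {xnew βhat v : Fin p → ℝ} {lam : ℝ} {j : Fin p} (hj : j ∉ J) :
    tOne x J xnew βhat v lam ≤
      rpp (Real.sign (gammaV x J xnew j) * lam - v j) (gammaV x J xnew j) :=
  inf_le_right.trans (Finset.inf_le (Finset.mem_compl.mpr hj))

section Path

variable {n p : ℕ} {x : Fin n → Fin p → ℝ} {J : Finset (Fin p)} (xnew : Fin p → ℝ)

theorem gramJ_posSemidef : (gramJ x J).PosSemidef := by
  set A : Matrix (Fin n) ↥J ℝ := Matrix.of fun i a => x i a
  have hgram : gramJ x J = (1 / (n : ℝ)) • (Aᴴ * A) := by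
    ext a b
    simp [A, gramJ, Matrix.mul_apply]
  rw [hgram]
  exact (Matrix.posSemidef_conjTranspose_mul_self _).smul (by positivity)

theorem gramJ_mulVec_invPart (hinv : IsUnit (gramJ x J)) :
    gramJ x J *ᵥ invPart x J xnew = subv xnew J := by
  rw [invPart, Matrix.mulVec_mulVec,
    Matrix.mul_nonsing_inv _ ((Matrix.isUnit_iff_isUnit_det _).mp hinv), Matrix.one_mulVec]

theorem one_le_denomC (hinv : IsUnit (gramJ x J)) : 1 ≤ denomC x J xnew := by
  have hquad := (gramJ_posSemidef (x := x) (J := J)).dotProduct_mulVec_nonneg (invPart x J xnew)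
  rw [star_trivial, gramJ_mulVec_invPart xnew hinv, dotProduct_comm] at hquad
  rw [denomC, le_add_iff_nonneg_right]
  positivity

theorem gammaV_eq_zero_of_mem (hinv : IsUnit (gramJ x J)) {j : Fin p} (hj : j ∈ J) :
    gammaV x J xnew j = 0 := by
  have hrow := congrFun (gramJ_mulVec_invPart xnew hinv) ⟨j, hj⟩
  simp only [Matrix.mulVec, dotProduct, gramJ, Matrix.of_apply, subv] at hrow
  rw [gammaV, hrow, sub_self, zero_div]

theorem betaT_eq_add {βhat : Fin p → ℝ} (hsupp : ∀ j ∉ J, βhat j = 0) (t : ℝ) :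
    betaT x J xnew βhat t = βhat + t • etaV x J xnew := by
  ext j
  by_cases hj : j ∈ J
  · simp [betaT, hj]
  · simp [betaT, etaV, hj, hsupp j hj]

theorem dotp_etaV (a : Fin p → ℝ) :
    dotp a (etaV x J xnew) = 1 / (n : ℝ) * (subv a J ⬝ᵥ invPart x J xnew) / denomC x J xnew := by
  rw [dotp, ← Finset.sum_subset (Finset.subset_univ J) fun j _ hj => by simp [etaV, hj],
    ← Finset.sum_coe_sort J, dotProduct, Finset.mul_sum, Finset.sum_div]
  refine Finset.sum_congr rfl fun b _ => ?_
  simp only [etaV, dif_pos b.2, subv]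
  ring

variable {βhat : Fin p → ℝ} (t : ℝ)

theorem dotp_betaT (hsupp : ∀ j ∉ J, βhat j = 0) (a : Fin p → ℝ) :
    dotp a (betaT x J xnew βhat t) = dotp a βhat + t * dotp a (etaV x J xnew) := by
  simp only [betaT_eq_add xnew hsupp, dotp_eq_dotProduct, dotProduct_add, dotProduct_smul,
    smul_eq_mul]

theorem sub_dotp_xnew_betaT (hsupp : ∀ j ∉ J, βhat j = 0) (hinv : IsUnit (gramJ x J)) :
    dotp xnew βhat + t - dotp xnew (betaT x J xnew βhat t) = t / denomC x J xnew := by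
  have hc : denomC x J xnew ≠ 0 := (zero_lt_one.trans_le (one_le_denomC xnew hinv)).ne'
  rw [dotp_betaT xnew t hsupp, dotp_etaV]
  field_simp
  rw [denomC]
  ring

theorem sum_residual_betaT (hsupp : ∀ j ∉ J, βhat j = 0) (y : Fin n → ℝ) (j : Fin p) :
    ∑ i, (y i - dotp (x i) (betaT x J xnew βhat t)) * x i j + t / denomC x J xnew * xnew j =
      ∑ i, (y i - dotp (x i) βhat) * x i j + t * gammaV x J xnew j := by
  have hcross : ∑ i, dotp (x i) (etaV x J xnew) * x i j =
      (∑ a : ↥J, ((1 / (n : ℝ)) * ∑ i, x i j * x i a.1) * invPart x J xnew a) /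
        denomC x J xnew := by
    simp only [dotp_etaV, dotProduct, subv, Finset.sum_mul, Finset.mul_sum, Finset.sum_div]
    rw [Finset.sum_comm]
    exact Finset.sum_congr rfl fun a _ => Finset.sum_congr rfl fun i _ => by ring
  simp only [dotp_betaT xnew t hsupp, sub_add_eq_sub_sub, sub_mul, Finset.sum_sub_distrib,
    mul_assoc, ← Finset.mul_sum, hcross, gammaV]
  ring

end Path

/-- the initial piece of the perturb-one Lasso homotopy.  If `β̂` minimizes the
Lasso objective with support `J₀`, the dual vector is strictly feasible off `J₀`, and `Σ̂_{J₀}`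
is invertible, then for every `t ∈ [0, t₁]` the vector `β(t)` with `β(t)_{J₀} = β̂_{J₀} + t·η(0)`
and `β(t)_{J₀^c} = 0` globally minimizes the augmented objective
`F(β) + (1/2)(x_{n+1}'β̂ + t − x_{n+1}'β)²`. -/
theorem lasso_homotopy_initial_piece {n p : ℕ} (x : Fin n → Fin p → ℝ) (y : Fin n → ℝ)
    (xnew : Fin p → ℝ) (lam : ℝ) (hlam : 0 < lam) (βhat : Fin p → ℝ)
    (hmin : ∀ β, lassoObj x y lam βhat ≤ lassoObj x y lam β)
    (J₀ : Finset (Fin p)) (hJ₀ : ∀ j, j ∈ J₀ ↔ βhat j ≠ 0)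
    (v : Fin p → ℝ) (hv : ∀ j, ∑ i, (y i - dotp (x i) βhat) * x i j = v j)
    (hstrict : ∀ j ∉ J₀, |v j| < lam)
    (hinv : IsUnit (gramJ x J₀)) :
    ∀ t : ℝ, 0 ≤ t → (t : EReal) ≤ tOne x J₀ xnew βhat v lam →
      ∀ β, augObj x y xnew lam (dotp xnew βhat + t) (betaT x J₀ xnew βhat t) ≤
        augObj x y xnew lam (dotp xnew βhat + t) β := by
  intro t ht ht₁ β
  have hsupp : ∀ j ∉ J₀, βhat j = 0 := fun j hj => not_not.mp (mt (hJ₀ j).mpr hj)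
  have hkkt : ∀ j ∈ J₀, v j = lam * Real.sign (βhat j) := fun j hj =>
    hv j ▸ lasso_kkt_of_ne_zero x y lam hmin ((hJ₀ j).mp hj)
  refine augObj_le_of_subgradient x y lam xnew _ _ (fun j => v j + t * gammaV x J₀ xnew j)
    (fun j => ?_) (fun j => ?_) (fun j => ?_) β
  · rw [sub_dotp_xnew_betaT xnew t hsupp hinv, sum_residual_betaT xnew t hsupp, hv]
  · by_cases hj : j ∈ J₀
    · rw [gammaV_eq_zero_of_mem xnew hinv hj, mul_zero, add_zero, hkkt j hj, abs_mul,
        Real.abs_sign_of_ne_zero ((hJ₀ j).mp hj), abs_of_pos hlam, mul_one]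
    · exact abs_add_mul_le_of_le_rpp ht (hstrict j hj) (ht₁.trans (tOne_le_rpp_gammaV hj))
  · by_cases hj : j ∈ J₀
    · have hsame := mul_add_mul_nonneg_of_le_rpp ht (ht₁.trans (tOne_le_rpp_etaV hj))
      simp only [betaT, if_pos hj]
      rw [gammaV_eq_zero_of_mem xnew hinv hj, mul_zero, add_zero, hkkt j hj, mul_assoc,
        Real.sign_mul_eq_abs_of_mul_nonneg ((hJ₀ j).mp hj) hsame]
    · simp [betaT, hj]
end
end

section
/- Let f, g_1, …, g_n : [0, ∞) → ℝ be continuous functions such that for every i the function t ↦ f(t) − g_i(t) is strictly increasing on [0, ∞). Then the counting function N(t) = #{1 ≤ i ≤ n : g_i(t) ≥ f(t)} is nonincreasing in t, and consequently for every integer m the set {t ∈ [0, ∞) : N(t) ≥ m} is an initial segment of [0, ∞) (hence an interval, possibly empty). -/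
theorem le_of_le_of_monotoneOn_sub {α β : Type*} [Preorder α] [AddCommGroup β] [PartialOrder β]
    [IsOrderedAddMonoid β] {f g : α → β} {D : Set α} (hfg : MonotoneOn (fun t => f t - g t) D)
    {a b : α} (ha : a ∈ D) (hb : b ∈ D) (hab : a ≤ b) (hb_le : f b ≤ g b) : f a ≤ g a := by
  have h : f a - g a ≤ f b - g b := hfg ha hb hab
  exact sub_nonpos.mp (h.trans (sub_nonpos.mpr hb_le))

theorem Finset.antitoneOn_card_filter {ι α : Type*} [Preorder α] (s : Finset ι)
    (p : α → ι → Prop) [∀ a, DecidablePred (p a)] {D : Set α}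
    (hp : ∀ i ∈ s, ∀ a ∈ D, ∀ b ∈ D, a ≤ b → p b i → p a i) :
    AntitoneOn (fun a => (s.filter (p a)).card) D := by
  intro a ha b hb hab
  refine Finset.card_le_card fun i hi => ?_
  rw [Finset.mem_filter] at hi ⊢
  exact ⟨hi.1, hp i hi.1 a ha b hb hab hi.2⟩

theorem counting_function_antitone_general {n : ℕ} (f : ℝ → ℝ) (g : Fin n → ℝ → ℝ)
    (hmono : ∀ i, StrictMonoOn (fun t => f t - g i t) (Set.Ici 0)) :
    (∀ s t : ℝ, 0 ≤ s → s ≤ t →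
      (Finset.univ.filter fun i : Fin n => f t ≤ g i t).card ≤
        (Finset.univ.filter fun i : Fin n => f s ≤ g i s).card) ∧
    (∀ m : ℤ, ∀ t ∈ {u : ℝ | u ∈ Set.Ici (0 : ℝ) ∧
        m ≤ ((Finset.univ.filter fun i : Fin n => f u ≤ g i u).card : ℤ)},
      ∀ s : ℝ, 0 ≤ s → s ≤ t →
        s ∈ {u : ℝ | u ∈ Set.Ici (0 : ℝ) ∧
          m ≤ ((Finset.univ.filter fun i : Fin n => f u ≤ g i u).card : ℤ)}) := by
  have hN : AntitoneOn (fun t => (Finset.univ.filter fun i : Fin n => f t ≤ g i t).card)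
      (Set.Ici 0) :=
    Finset.univ.antitoneOn_card_filter _ fun i _ _ ha _ hb hab =>
      le_of_le_of_monotoneOn_sub (hmono i).monotoneOn ha hb hab
  refine ⟨fun s t hs hst => hN hs (hs.trans hst : (0 : ℝ) ≤ t) hst, ?_⟩
  rintro m t ⟨ht, hm⟩ s hs hst
  exact ⟨hs, hm.trans (by exact_mod_cast hN hs ht hst)⟩

/-- monotonicity of the rank counting function.  If `f, g₁, …, g_n` are continuous
on `[0,∞)` and each `t ↦ f(t) − gᵢ(t)` is strictly increasing on `[0,∞)`, then
`N(t) = #{i : gᵢ(t) ≥ f(t)}` is nonincreasing on `[0,∞)`, and for every integer `m` the set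
`{t ∈ [0,∞) : N(t) ≥ m}` is an initial segment of `[0,∞)` (hence an interval, possibly
empty). -/
theorem counting_function_antitone {n : ℕ} (f : ℝ → ℝ) (g : Fin n → ℝ → ℝ)
    (hf : ContinuousOn f (Set.Ici 0)) (hg : ∀ i, ContinuousOn (g i) (Set.Ici 0))
    (hmono : ∀ i, StrictMonoOn (fun t => f t - g i t) (Set.Ici 0)) :
    (∀ s t : ℝ, 0 ≤ s → s ≤ t →
      (Finset.univ.filter fun i : Fin n => f t ≤ g i t).card ≤
        (Finset.univ.filter fun i : Fin n => f s ≤ g i s).card) ∧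
    (∀ m : ℤ, ∀ t ∈ {u : ℝ | u ∈ Set.Ici (0 : ℝ) ∧
        m ≤ ((Finset.univ.filter fun i : Fin n => f u ≤ g i u).card : ℤ)},
      ∀ s : ℝ, 0 ≤ s → s ≤ t →
        s ∈ {u : ℝ | u ∈ Set.Ici (0 : ℝ) ∧
          m ≤ ((Finset.univ.filter fun i : Fin n => f u ≤ g i u).card : ℤ)}) :=
  counting_function_antitone_general f g hmono
end

section
/- Let r_1, …, r_{n+1} : ℝ → ℝ be affine functions, let I ⊆ ℝ be an interval, and let m be an integer. Then the set {t ∈ I : #{1 ≤ i ≤ n+1 : |r_i(t)| ≥ |r_{n+1}(t)|} ≥ m} is a finite union of intervals. -/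
open scoped BigOperators

noncomputable section

private lemma ordConnected_affine_nonneg (f : ℝ → ℝ) (hf : ∃ a b : ℝ, ∀ t, f t = a * t + b) :
    {t : ℝ | 0 ≤ f t}.OrdConnected := by
  obtain ⟨a, b, hab⟩ := hf
  constructor
  intro x hx z hz y hy
  obtain ⟨hxy, hyz⟩ := hy
  simp only [Set.mem_setOf_eq, hab] at hx hz ⊢
  rcases le_total 0 a with ha | ha
  · nlinarith
  · nlinarith

private lemma ordConnected_affine_nonpos (f : ℝ → ℝ) (hf : ∃ a b : ℝ, ∀ t, f t = a * t + b) :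
    {t : ℝ | f t ≤ 0}.OrdConnected := by
  obtain ⟨a, b, hab⟩ := hf
  constructor
  intro x hx z hz y hy
  obtain ⟨hxy, hyz⟩ := hy
  simp only [Set.mem_setOf_eq, hab] at hx hz ⊢
  rcases le_total 0 a with ha | ha
  · nlinarith
  · nlinarith

private lemma abs_le_abs_iff_cases (x y : ℝ) :
    |x| ≤ |y| ↔ (0 ≤ y - x ∧ 0 ≤ y + x) ∨ (y - x ≤ 0 ∧ y + x ≤ 0) := by
  constructor
  · intro h
    rcases le_total 0 y with hy | hy
    · left
      rw [abs_of_nonneg hy] at h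
      have h1 := le_abs_self x
      have h2 := neg_abs_le x
      constructor <;> linarith
    · right
      rw [abs_of_nonpos hy] at h
      have h1 := le_abs_self x
      have h2 := neg_abs_le x
      constructor <;> linarith
  · rintro (⟨h1, h2⟩ | ⟨h1, h2⟩)
    · have hy : 0 ≤ y := by linarith
      rw [abs_of_nonneg hy]
      rcases abs_cases x with ⟨hx, _⟩ | ⟨hx, _⟩ <;> linarith
    · have hy : y ≤ 0 := by linarith
      rw [abs_of_nonpos hy]
      rcases abs_cases x with ⟨hx, _⟩ | ⟨hx, _⟩ <;> linarith

/-- if `r₁, …, r_{n+1} : ℝ → ℝ` are affine functions, `I ⊆ ℝ` is an interval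
(order-connected set), and `m` is an integer, then
`{t ∈ I : #{1 ≤ i ≤ n+1 : |rᵢ(t)| ≥ |r_{n+1}(t)|} ≥ m}` is a finite union of intervals. -/
theorem rank_superlevel_finite_union_of_intervals {n : ℕ} (r : Fin (n + 1) → ℝ → ℝ)
    (haffine : ∀ i, ∃ a b : ℝ, ∀ t, r i t = a * t + b)
    (I : Set ℝ) (hI : I.OrdConnected) (m : ℤ) :
    ∃ (N : ℕ) (S : Fin N → Set ℝ),
      (∀ k, (S k).OrdConnected) ∧
      {t : ℝ | t ∈ I ∧
          m ≤ ((Finset.univ.filter fun i : Fin (n + 1) =>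
            |r (Fin.last n) t| ≤ |r i t|).card : ℤ)} = ⋃ k, S k := by
  classical
  set L := Fin.last n with hL
  -- affine combinations
  have hsub : ∀ i : Fin (n + 1), ∃ a b : ℝ, ∀ t, r i t - r L t = a * t + b := by
    intro i
    obtain ⟨a, b, hab⟩ := haffine i
    obtain ⟨c, d, hcd⟩ := haffine L
    exact ⟨a - c, b - d, fun t => by rw [hab, hcd]; ring⟩
  have hadd : ∀ i : Fin (n + 1), ∃ a b : ℝ, ∀ t, r i t + r L t = a * t + b := by
    intro i
    obtain ⟨a, b, hab⟩ := haffine i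
    obtain ⟨c, d, hcd⟩ := haffine L
    exact ⟨a + c, b + d, fun t => by rw [hab, hcd]; ring⟩
  let A : Fin (n + 1) → Set ℝ := fun i => {t | 0 ≤ r i t - r L t ∧ 0 ≤ r i t + r L t}
  let B : Fin (n + 1) → Set ℝ := fun i => {t | r i t - r L t ≤ 0 ∧ r i t + r L t ≤ 0}
  have hA : ∀ i, (A i).OrdConnected := by
    intro i
    have : A i = {t | 0 ≤ r i t - r L t} ∩ {t | 0 ≤ r i t + r L t} := rfl
    rw [this]
    exact (ordConnected_affine_nonneg _ (hsub i)).inter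
      (ordConnected_affine_nonneg _ (hadd i))
  have hB : ∀ i, (B i).OrdConnected := by
    intro i
    have : B i = {t | r i t - r L t ≤ 0} ∩ {t | r i t + r L t ≤ 0} := rfl
    rw [this]
    exact (ordConnected_affine_nonpos _ (hsub i)).inter
      (ordConnected_affine_nonpos _ (hadd i))
  let C : Fin (n + 1) → Fin 3 → Set ℝ := fun i k =>
    if k = 0 then A i else if k = 1 then B i else Set.univ
  have hC : ∀ i k, (C i k).OrdConnected := by
    intro i k
    simp only [C]
    split_ifs
    · exact hA i
    · exact hB i
    · exact Set.ordConnected_univ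
  let good : (Fin (n + 1) → Fin 3) → Prop := fun σ =>
    m ≤ ((Finset.univ.filter fun i => σ i ≠ 2).card : ℤ)
  let piece : (Fin (n + 1) → Fin 3) → Set ℝ := fun σ =>
    if good σ then I ∩ ⋂ i, C i (σ i) else ∅
  have hpiece : ∀ σ, (piece σ).OrdConnected := by
    intro σ
    simp only [piece]
    split_ifs
    · exact hI.inter (Set.ordConnected_iInter fun i => hC i (σ i))
    · exact Set.ordConnected_empty
  let e := Fintype.equivFin (Fin (n + 1) → Fin 3)
  refine ⟨Fintype.card (Fin (n + 1) → Fin 3), fun k => piece (e.symm k),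
    fun k => hpiece _, ?_⟩
  ext t
  simp only [Set.mem_setOf_eq, Set.mem_iUnion]
  constructor
  · rintro ⟨htI, hcard⟩
    set σ : Fin (n + 1) → Fin 3 := fun i =>
      if |r L t| ≤ |r i t| then
        (if 0 ≤ r i t - r L t ∧ 0 ≤ r i t + r L t then 0 else 1)
      else 2 with hσ
    have hσne : ∀ i, (σ i ≠ 2) ↔ |r L t| ≤ |r i t| := by
      intro i
      simp only [σ]
      split_ifs with h1 h2
      · simp [h1]
      · simp [h1]
      · simp [h1]
    have hgood : good σ := by
      have hfe : (Finset.univ.filter fun i => σ i ≠ 2) =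
          (Finset.univ.filter fun i : Fin (n + 1) => |r L t| ≤ |r i t|) := by
        apply Finset.filter_congr
        intro i _
        simp [hσne i]
      simp only [good, hfe]
      exact hcard
    refine ⟨e σ, ?_⟩
    simp only [piece, Equiv.symm_apply_apply, if_pos hgood]
    refine ⟨htI, Set.mem_iInter.mpr fun i => ?_⟩
    simp only [C, σ]
    by_cases h1 : |r L t| ≤ |r i t|
    · by_cases h2 : 0 ≤ r i t - r L t ∧ 0 ≤ r i t + r L t
      · rw [if_pos h1, if_pos h2, if_pos rfl]
        exact h2
      · rw [if_pos h1, if_neg h2, if_neg (by decide), if_pos rfl]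
        rcases (abs_le_abs_iff_cases (r L t) (r i t)).mp h1 with h | h
        · exact absurd h h2
        · exact h
    · rw [if_neg h1, if_neg (by decide), if_neg (by decide)]
      trivial
  · rintro ⟨k, hk⟩
    set σ := e.symm k with hσ
    simp only [piece] at hk
    split_ifs at hk with hgood
    · obtain ⟨htI, hint⟩ := hk
      refine ⟨htI, ?_⟩
      have hsubs : (Finset.univ.filter fun i => σ i ≠ 2) ⊆
          (Finset.univ.filter fun i : Fin (n + 1) => |r L t| ≤ |r i t|) := by
        intro i hi
        simp only [Finset.mem_filter, Finset.mem_univ, true_and] at hi ⊢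
        have hti : t ∈ C i (σ i) := Set.mem_iInter.mp hint i
        simp only [C] at hti
        split_ifs at hti with h1 h2
        · exact (abs_le_abs_iff_cases (r L t) (r i t)).mpr (Or.inl hti)
        · exact (abs_le_abs_iff_cases (r L t) (r i t)).mpr (Or.inr hti)
        · exact absurd (by omega : σ i = 2) hi
      calc m ≤ ((Finset.univ.filter fun i => σ i ≠ 2).card : ℤ) := hgood
        _ ≤ _ := by exact_mod_cast Finset.card_le_card hsubs
    · exact hk.elim
end
end

section
/- Let Y_1, …, Y_{n+1} be exchangeable real random variables. Then P(Y_{n+1} > max_{1≤i≤n} Y_i) ≤ 1/(n+1) and P(Y_{n+1} < min_{1≤i≤n} Y_i) ≤ 1/(n+1); consequently P(Y_{n+1} ∈ [Y_{(1)}, Y_{(n)}]) ≥ 1 − 2/(n+1), where Y_{(1)} = min_{1≤i≤n} Y_i and Y_{(n)} = max_{1≤i≤n} Y_i are the smallest and largest of the first n values. -/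
/-!
For an asymmetric relation `r`, at most one index `j` can satisfy `r (Y i) (Y j)` for all
`i ≠ j`, so these `n + 1` events are pairwise disjoint. Exchangeability (through the transposition
of `j` and `n + 1`) gives them all the same probability, which is therefore at most `1/(n+1)`.
Taking `r = (<)` and `r = (>)` gives the two tail bounds, and the complement of the coverage event
is the union of the two tail events.
-/

open scoped ENNReal

open MeasureTheory Function

section RelTop

variable {ι α : Type*} (r : α → α → Prop)

def relTopSet (j : ι) : Set (ι → α) := {f | ∀ i, i ≠ j → r (f i) (f j)}

variable {r}

lemma preimage_comp_relTopSet (σ : Equiv.Perm ι) (j : ι) :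
    (fun f : ι → α => f ∘ σ) ⁻¹' relTopSet r j = relTopSet r (σ j) := by
  ext f
  simp only [relTopSet, Set.mem_preimage, Set.mem_ofPred_eq, Function.comp_apply]
  exact (forall_congr' fun i => by rw [σ.injective.ne_iff]).trans σ.forall_congr_right

lemma pairwise_disjoint_relTopSet (hr : ∀ a b, r a b → ¬ r b a) :
    Pairwise (Disjoint on (relTopSet r : ι → Set (ι → α))) :=
  fun j k hjk => Set.disjoint_left.2 fun _ hj hk => hr _ _ (hj k hjk.symm) (hk j hjk)

lemma measurableSet_relTopSet [Countable ι] [MeasurableSpace α]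
    (hr : MeasurableSet {p : α × α | r p.1 p.2}) (j : ι) : MeasurableSet (relTopSet r j) := by
  have : relTopSet r j = ⋂ i, ⋂ (_ : i ≠ j),
      (fun f : ι → α => (f i, f j)) ⁻¹' {p : α × α | r p.1 p.2} := by
    ext f; simp [relTopSet]
  rw [this]
  exact .iInter fun i => .iInter fun _ =>
    hr.preimage ((measurable_pi_apply i).prodMk (measurable_pi_apply j))

end RelTop

lemma measure_le_inv_card_of_pairwise_disjoint {Ω ι : Type*} [MeasurableSpace Ω]
    {μ : Measure Ω} [IsProbabilityMeasure μ] [Fintype ι] {E : ι → Set Ω}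
    (hdisj : Pairwise (Disjoint on E)) (hE : ∀ j, MeasurableSet (E j))
    (heq : ∀ j k, μ (E j) = μ (E k)) (k : ι) :
    μ (E k) ≤ (Fintype.card ι : ℝ≥0∞)⁻¹ := by
  rw [ENNReal.le_inv_iff_mul_le]
  calc μ (E k) * Fintype.card ι = ∑ j, μ (E j) := by
        simp [heq _ k, Finset.sum_const, mul_comm]
    _ = μ (⋃ j, E j) := by
        rw [measure_iUnion hdisj hE, tsum_fintype (L := .unconditional ι)]
    _ ≤ 1 := prob_le_one

lemma measure_preimage_eq_of_exchangeable {Ω ι α : Type*} [MeasurableSpace Ω]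
    [MeasurableSpace α]
    {μ : Measure Ω} {Y : ι → Ω → α} (hmeas : ∀ i, Measurable (Y i))
    {σ : Equiv.Perm ι} (hσ : Measure.map (fun ω => fun i => Y (σ i) ω) μ =
      Measure.map (fun ω => fun i => Y i ω) μ)
    {S : Set (ι → α)} (hS : MeasurableSet S) :
    μ ((fun ω => fun i => Y i ω) ⁻¹' ((fun f => f ∘ σ) ⁻¹' S)) =
      μ ((fun ω => fun i => Y i ω) ⁻¹' S) := by
  have hY : Measurable fun ω i => Y i ω := measurable_pi_lambda _ hmeas
  rw [← Measure.map_apply hY hS, ← hσ,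
    Measure.map_apply (measurable_pi_lambda _ fun i => hmeas _) hS]
  rfl

lemma measure_forall_ne_rel_le_inv_card {Ω ι α : Type*} [MeasurableSpace Ω] [MeasurableSpace α]
    {μ : Measure Ω} [IsProbabilityMeasure μ] [Fintype ι] [DecidableEq ι]
    {Y : ι → Ω → α} (hmeas : ∀ i, Measurable (Y i))
    (hexch : ∀ σ : Equiv.Perm ι,
      Measure.map (fun ω => fun i => Y (σ i) ω) μ = Measure.map (fun ω => fun i => Y i ω) μ)
    {r : α → α → Prop} (hr : ∀ a b, r a b → ¬ r b a)
    (hrm : MeasurableSet {p : α × α | r p.1 p.2}) (j : ι) :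
    μ {ω | ∀ i, i ≠ j → r (Y i ω) (Y j ω)} ≤ (Fintype.card ι : ℝ≥0∞)⁻¹ := by
  have hY : Measurable fun ω i => Y i ω := measurable_pi_lambda _ hmeas
  refine measure_le_inv_card_of_pairwise_disjoint (E := fun j => _ ⁻¹' relTopSet r j)
    ((pairwise_disjoint_relTopSet hr).mono fun _ _ h => h.preimage _)
    (fun j => (measurableSet_relTopSet hrm j).preimage hY) (fun j k => ?_) j
  have := measure_preimage_eq_of_exchangeable hmeas (hexch (Equiv.swap k j))
    (measurableSet_relTopSet hrm k)
  rwa [preimage_comp_relTopSet, Equiv.swap_apply_left] at this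

lemma measure_forall_castSucc_rel_last_le {Ω : Type*} [MeasurableSpace Ω] {μ : Measure Ω}
    [IsProbabilityMeasure μ] {n : ℕ} {Y : Fin (n + 1) → Ω → ℝ}
    (hmeas : ∀ i, Measurable (Y i))
    (hexch : ∀ σ : Equiv.Perm (Fin (n + 1)),
      Measure.map (fun ω => fun i => Y (σ i) ω) μ = Measure.map (fun ω => fun i => Y i ω) μ)
    {r : ℝ → ℝ → Prop} (hr : ∀ a b, r a b → ¬ r b a)
    (hrm : MeasurableSet {p : ℝ × ℝ | r p.1 p.2}) :
    μ {ω | ∀ i : Fin n, r (Y i.castSucc ω) (Y (Fin.last n) ω)} ≤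
      ((n : ℝ≥0∞) + 1)⁻¹ := by
  simpa [Fin.forall_fin_succ', Fin.castSucc_ne_last] using
    measure_forall_ne_rel_le_inv_card hmeas hexch hr hrm (Fin.last n)

lemma one_sub_add_le_measure {Ω : Type*} [MeasurableSpace Ω] {μ : Measure Ω}
    [IsProbabilityMeasure μ] {A B C : Set Ω} (h : Cᶜ ⊆ A ∪ B) {a b : ℝ≥0∞}
    (hA : μ A ≤ a) (hB : μ B ≤ b) : 1 - (a + b) ≤ μ C := by
  rw [tsub_le_iff_right, ← measure_univ (μ := μ)]
  calc μ .univ ≤ μ C + μ Cᶜ := measure_univ_le_add_compl C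
    _ ≤ μ C + (μ A + μ B) := by gcongr; exact (measure_mono h).trans (measure_union_le A B)
    _ ≤ μ C + (a + b) := by gcongr

theorem exchangeable_range_coverage_general {Ω : Type*} [MeasurableSpace Ω] (μ : Measure Ω)
    [IsProbabilityMeasure μ] {n : ℕ} (Y : Fin (n + 1) → Ω → ℝ)
    (hmeas : ∀ i, Measurable (Y i))
    (hexch : ∀ σ : Equiv.Perm (Fin (n + 1)),
      Measure.map (fun ω => fun i => Y (σ i) ω) μ = Measure.map (fun ω => fun i => Y i ω) μ) :
    μ {ω | ∀ i : Fin n, Y i.castSucc ω < Y (Fin.last n) ω} ≤ ((n : ℝ≥0∞) + 1)⁻¹ ∧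
    μ {ω | ∀ i : Fin n, Y (Fin.last n) ω < Y i.castSucc ω} ≤ ((n : ℝ≥0∞) + 1)⁻¹ ∧
    1 - 2 * ((n : ℝ≥0∞) + 1)⁻¹ ≤
      μ {ω | (∃ i : Fin n, Y i.castSucc ω ≤ Y (Fin.last n) ω) ∧
             (∃ i : Fin n, Y (Fin.last n) ω ≤ Y i.castSucc ω)} := by
  have habove := measure_forall_castSucc_rel_last_le hmeas hexch (r := (· < ·))
    (fun _ _ => lt_asymm) (measurableSet_lt measurable_fst measurable_snd)
  have hbelow := measure_forall_castSucc_rel_last_le hmeas hexch (r := (· > ·))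
    (fun _ _ => lt_asymm) (measurableSet_lt measurable_snd measurable_fst)
  refine ⟨habove, hbelow, ?_⟩
  rw [two_mul]
  refine one_sub_add_le_measure (fun ω hω => ?_) habove hbelow
  simp only [Set.mem_compl_iff, Set.mem_ofPred_eq, not_and_or, not_exists, not_le] at hω
  exact hω.symm

/-- if `Y₁, …, Y_{n+1}` are exchangeable real random variables (with `n ≥ 1`),
then `P(Y_{n+1} > max_{1≤i≤n} Yᵢ) ≤ 1/(n+1)` and `P(Y_{n+1} < min_{1≤i≤n} Yᵢ) ≤ 1/(n+1)`;
consequently `P(Y_{(1)} ≤ Y_{n+1} ≤ Y_{(n)}) ≥ 1 − 2/(n+1)`.  Here `Y_{n+1} > max_i Yᵢ` is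
expressed as `∀ i, Yᵢ < Y_{n+1}`, and `Y_{n+1} ∈ [Y_{(1)}, Y_{(n)}]` as
`(∃ i, Yᵢ ≤ Y_{n+1}) ∧ (∃ i, Y_{n+1} ≤ Yᵢ)`. -/
theorem exchangeable_range_coverage {Ω : Type*} [MeasurableSpace Ω] (μ : Measure Ω)
    [IsProbabilityMeasure μ] {n : ℕ} (hn : 0 < n) (Y : Fin (n + 1) → Ω → ℝ)
    (hmeas : ∀ i, Measurable (Y i))
    (hexch : ∀ σ : Equiv.Perm (Fin (n + 1)),
      Measure.map (fun ω => fun i => Y (σ i) ω) μ = Measure.map (fun ω => fun i => Y i ω) μ) :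
    μ {ω | ∀ i : Fin n, Y i.castSucc ω < Y (Fin.last n) ω} ≤ ((n : ℝ≥0∞) + 1)⁻¹ ∧
    μ {ω | ∀ i : Fin n, Y (Fin.last n) ω < Y i.castSucc ω} ≤ ((n : ℝ≥0∞) + 1)⁻¹ ∧
    1 - 2 * ((n : ℝ≥0∞) + 1)⁻¹ ≤
      μ {ω | (∃ i : Fin n, Y i.castSucc ω ≤ Y (Fin.last n) ω) ∧
             (∃ i : Fin n, Y (Fin.last n) ω ≤ Y i.castSucc ω)} :=
  exchangeable_range_coverage_general μ Y hmeas hexch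
end
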